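/- Let B be a regular local ring, G a cyclic group of prime order p acting on B by local automorphisms with invariant ring A = B^G, such that the map on residue fields k_A → k_B is an isomorphism. If (y₁, …, y_d) generates m_B, then I_G = B·I(y₁) + … + B·I(y_d), where I(b) = σ(b) − b for a generator σ of G. -/

import Mathlib

/-- A noetherian local ring is regular if its maximal ideal is generated by
`dim R` elements. -/
def IsRegularLocal (R : Type*) [CommRing R] [IsLocalRing R] : Prop :=
  IsNoetherianRing R ∧ ∃ s : Finset R,
    Ideal.span (s : Set R) = IsLocalRing.maximalIdeal R ∧
    (s.card : WithBot (WithTop ℕ)) = ringKrullDim R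

/-!
Write `I σ` for the ideal generated by all `σ b - b`. If `σ a = a` and `b - a = ∑ cᵢ yᵢ`, then
`σ b - b = ∑ σ(cᵢ) (σ yᵢ - yᵢ) + ∑ yᵢ (σ cᵢ - cᵢ)`, so the hypothesis `k_A ≅ k_B` gives
`I σ ⊆ (σ yᵢ - yᵢ)ᵢ + m_B · I σ`, and Nakayama's lemma finishes. The ideal generated by the
`σᵏ b - b` is `I σ` because `σᵏ⁺¹ b - b = (σᵏ (σ b) - σ b) + (σ b - b)`.
-/

namespace RingEquiv

variable {R : Type*} [CommRing R] (σ : R ≃+* R)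

def augmentationIdeal : Ideal R :=
  Ideal.span (Set.range fun b => σ b - b)

theorem map_sub_self_mem_augmentationIdeal (b : R) : σ b - b ∈ σ.augmentationIdeal :=
  Ideal.subset_span ⟨b, rfl⟩

theorem pow_apply_sub_self_mem_augmentationIdeal (k : ℕ) (b : R) :
    (σ ^ k) b - b ∈ σ.augmentationIdeal := by
  induction k generalizing b with
  | zero => simp
  | succ k ih =>
    have hsplit : (σ ^ (k + 1)) b - b = ((σ ^ k) (σ b) - σ b) + (σ b - b) := by
      rw [pow_succ, RingAut.mul_apply]
      ring
    rw [hsplit]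
    exact add_mem (ih (σ b)) (σ.map_sub_self_mem_augmentationIdeal b)

theorem span_pow_apply_sub_self_eq_augmentationIdeal :
    Ideal.span {x | ∃ (k : ℕ) (b : R), x = (σ ^ k) b - b} = σ.augmentationIdeal := by
  refine le_antisymm ?_ ?_
  · rw [Ideal.span_le]
    rintro _ ⟨k, b, rfl⟩
    exact σ.pow_apply_sub_self_mem_augmentationIdeal k b
  · rw [augmentationIdeal, Ideal.span_le]
    rintro _ ⟨b, rfl⟩
    exact Ideal.subset_span ⟨1, b, by simp⟩

/-- The twisted Leibniz rule `σ (r x) - r x = σ r (σ x - x) + x (σ r - r)` propagates the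
statement from the generators `yᵢ` to their span. -/
theorem map_sub_self_mem_sup_smul_augmentationIdeal {ι : Type*} (y : ι → R) {x : R}
    (hx : x ∈ Ideal.span (Set.range y)) :
    σ x - x ∈ Ideal.span (Set.range fun i => σ (y i) - y i) ⊔
      Ideal.span (Set.range y) • σ.augmentationIdeal := by
  induction hx using Submodule.span_induction with
  | mem _ hmem =>
    obtain ⟨i, rfl⟩ := hmem
    exact Ideal.mem_sup_left (Ideal.subset_span ⟨i, rfl⟩)
  | zero => simp
  | add x x' _ _ hx hx' =>
    rw [map_add, add_sub_add_comm]
    exact add_mem hx hx'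
  | smul r x hx_mem hx =>
    have hleibniz : σ (r • x) - r • x = σ r * (σ x - x) + x * (σ r - r) := by
      rw [smul_eq_mul, map_mul]
      ring
    rw [hleibniz]
    exact add_mem (Ideal.mul_mem_left _ _ hx)
      (Ideal.mem_sup_right (Submodule.smul_mem_smul hx_mem
        (σ.map_sub_self_mem_augmentationIdeal r)))

theorem augmentationIdeal_le_sup_smul {ι : Type*} (y : ι → R) {m : Ideal R}
    (hy : Ideal.span (Set.range y) = m) (hres : ∀ b, ∃ a, σ a = a ∧ b - a ∈ m) :
    σ.augmentationIdeal ≤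
      Ideal.span (Set.range fun i => σ (y i) - y i) ⊔ m • σ.augmentationIdeal := by
  rw [augmentationIdeal, Ideal.span_le]
  rintro _ ⟨b, rfl⟩
  obtain ⟨a, hσa, hba⟩ := hres b
  show σ b - b ∈ _
  have hshift : σ b - b = σ (b - a) - (b - a) := by
    rw [map_sub, hσa]
    ring
  rw [hshift, ← hy]
  exact σ.map_sub_self_mem_sup_smul_augmentationIdeal y (hy ▸ hba)

theorem augmentationIdeal_eq_span_of_maximalIdeal [IsLocalRing R] [IsNoetherianRing R]
    {ι : Type*} (y : ι → R) (hy : Ideal.span (Set.range y) = IsLocalRing.maximalIdeal R)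
    (hres : ∀ b, ∃ a, σ a = a ∧ b - a ∈ IsLocalRing.maximalIdeal R) :
    σ.augmentationIdeal = Ideal.span (Set.range fun i => σ (y i) - y i) := by
  refine le_antisymm ?_ ?_
  · exact Submodule.le_of_le_smul_of_le_jacobson_bot (IsNoetherian.noetherian _)
      (IsLocalRing.jacobson_eq_maximalIdeal ⊥ bot_ne_top).ge
      (σ.augmentationIdeal_le_sup_smul y hy hres)
  · rw [Ideal.span_le]
    rintro _ ⟨i, rfl⟩
    exact σ.map_sub_self_mem_augmentationIdeal (y i)

end RingEquiv

theorem augmentation_ideal_eq_span_of_parameters_general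
    {B : Type*} [CommRing B] [IsLocalRing B] (hreg : IsRegularLocal B)
    (σ : B ≃+* B)
    (A : Subring B) (hA : A = RingHom.eqLocus (σ : B →+* B) (RingHom.id B))
    (hres : ∀ b : B, ∃ a ∈ A, b - a ∈ IsLocalRing.maximalIdeal B)
    (d : ℕ) (y : Fin d → B)
    (hy : Ideal.span (Set.range y) = IsLocalRing.maximalIdeal B) :
    Ideal.span {x | ∃ (k : ℕ) (b : B), x = (σ ^ k) b - b} =
      Ideal.span (Set.range fun i => σ (y i) - y i) := by
  have : IsNoetherianRing B := hreg.1
  subst hA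
  rw [σ.span_pow_apply_sub_self_eq_augmentationIdeal]
  exact σ.augmentationIdeal_eq_span_of_maximalIdeal y hy hres

/-- For a `p`-cyclic action by local automorphisms on a regular local ring `B`
with `k_A ≅ k_B`, if `(y₁, …, y_d)` generates `m_B` then
`I_G = B·I(y₁) + … + B·I(y_d)` where `I b = σ b − b`. -/
theorem augmentation_ideal_eq_span_of_parameters
    {B : Type*} [CommRing B] [IsLocalRing B] (hreg : IsRegularLocal B)
    (p : ℕ) (hp : p.Prime) (σ : B ≃+* B) (horder : orderOf σ = p)
    (hloc : ∀ b ∈ IsLocalRing.maximalIdeal B, σ b ∈ IsLocalRing.maximalIdeal B)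
    (A : Subring B) (hA : A = RingHom.eqLocus (σ : B →+* B) (RingHom.id B))
    (hres : ∀ b : B, ∃ a ∈ A, b - a ∈ IsLocalRing.maximalIdeal B)
    (d : ℕ) (y : Fin d → B)
    (hy : Ideal.span (Set.range y) = IsLocalRing.maximalIdeal B) :
    Ideal.span {x | ∃ (k : ℕ) (b : B), x = (σ ^ k) b - b} =
      Ideal.span (Set.range fun i => σ (y i) - y i) :=
  augmentation_ideal_eq_span_of_parameters_general hreg σ A hA hres d y hy
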